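/- The full-support baker's map C_d of 𝔠ⁿ (moving the first letter of the first coordinate to the front of the d-th coordinate, for 2 ≤ d ≤ n) can be written as a product of finitely many transposition homeomorphisms ⟨α β⟩; specifically, C_d = ⟨01₁,10₁⟩ · ⟨00₁, γ.0_d⟩⟨01₁, γ.1_d⟩⟨0₁,γ⟩ · ⟨0₁.01_d, 0₁.10_d⟩ · ⟨γ.0₁, 0₁.1_d.0_d⟩⟨γ.1₁, 0₁.1_d.1_d⟩⟨γ, 0₁.1_d⟩ · (analogous factors with 1₁ in place of 0₁) · ⟨0₁.01_d,0₁.10_d⟩⟨1₁.01_d,1₁.10_d⟩ — in particular, C_d lies in the group generated by the transpositions. -/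

import Mathlib

open scoped Classical

/-- Finite words over the alphabet `{0,1}`. -/
abbrev Word := List Bool
/-- Cantor space: infinite `{0,1}`-sequences. -/
abbrev Cantor := ℕ → Bool

/-- Concatenate a finite word with an infinite sequence. -/
def catW (α : Word) (w : Cantor) : Cantor :=
  fun i => if h : i < α.length then α.get ⟨i, h⟩ else w (i - α.length)

/-- The basic open set of sequences having `α` as a prefix. -/
def GammaW (α : Word) : Set Cantor := Set.range (catW α)

/-- Incomparability of words: neither is a prefix of the other. -/
def IncompW (α β : Word) : Prop := ¬ α <+: β ∧ ¬ β <+: α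

/-- Addresses: `n`-tuples of finite words. -/
abbrev Addr (n : ℕ) := Fin n → Word
/-- `n`-dimensional Cantor space. -/
abbrev CantorN (n : ℕ) := Fin n → Cantor

/-- The basic open set in `𝔠ⁿ` indexed by the address `α`. -/
def GammaN {n : ℕ} (α : Addr n) : Set (CantorN n) :=
  { w | ∀ d, w d ∈ GammaW (α d) }

/-- Incomparability of addresses: some coordinate pair is incomparable. -/
def IncompA {n : ℕ} (α β : Addr n) : Prop := ∃ d, IncompW (α d) (β d)

/-- Drop the first `k` symbols of an infinite sequence. -/
def dropSeq (k : ℕ) (w : Cantor) : Cantor := fun i => w (i + k)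

/-- Prepend the address `α` coordinatewise. -/
def catA {n : ℕ} (α : Addr n) (u : CantorN n) : CantorN n :=
  fun d => catW (α d) (u d)

/-- Remove the prefix `α` coordinatewise. -/
def dropA {n : ℕ} (α : Addr n) (w : CantorN n) : CantorN n :=
  fun d => dropSeq ((α d).length) (w d)

/-- The transposition `⟨α β⟩` of `𝔠ⁿ`: exchanges `Γ(α)` and `Γ(β)` by prefix
substitution and fixes all other points. -/
noncomputable def swapN {n : ℕ} (α β : Addr n) : CantorN n → CantorN n :=
  fun w =>
    if w ∈ GammaN α then catA β (dropA α w)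
    else if w ∈ GammaN β then catA α (dropA β w)
    else w

/-- Append the symbol `x` to the `d`-th coordinate of the address `α`. -/
def appA {n : ℕ} (α : Addr n) (d : Fin n) (x : Bool) : Addr n :=
  Function.update α d (α d ++ [x])

/-- Append the word `u` to the `d`-th coordinate of the address `α`. -/
def appW {n : ℕ} (α : Addr n) (d : Fin n) (u : Word) : Addr n :=
  Function.update α d (α d ++ u)

/-- Coordinatewise concatenation of addresses. -/
def concatA {n : ℕ} (α η : Addr n) : Addr n := fun d => α d ++ η d

/-- The address with word `u` in coordinate `d` and empty words elsewhere. -/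
def unitA {n : ℕ} (d : Fin n) (u : Word) : Addr n :=
  fun e => if e = d then u else []

/-- Prepend a letter to an infinite sequence. -/
def consSeq (b : Bool) (w : Cantor) : Cantor :=
  fun i => match i with
  | 0 => b
  | i + 1 => w i

/-- The full-support baker's map: moves the first letter of coordinate `1`
to the front of coordinate `d`. -/
def bakerFull {n : ℕ} [NeZero n] (d : Fin n) : CantorN n → CantorN n :=
  fun w e =>
    if e = 0 then dropSeq 1 (w 0)
    else if e = d then consSeq (w 0 0) (w d)
    else w e

/-- The inverse of the full-support baker's map: moves the first letter of
coordinate `d` to the front of coordinate `1`. -/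
def invBakerFull {n : ℕ} [NeZero n] (d : Fin n) : CantorN n → CantorN n :=
  fun w e =>
    if e = 0 then consSeq (w d 0) (w 0)
    else if e = d then dropSeq 1 (w d)
    else w e

/-- The index-`d` baker's map with support `Γ(α)`: sends `α.x₁.u ↦ α.x_d.u`
and fixes all points outside `Γ(α)`. -/
noncomputable def bakerN {n : ℕ} [NeZero n] (d : Fin n) (α : Addr n) :
    CantorN n → CantorN n :=
  fun w => if w ∈ GammaN α then catA α (bakerFull d (dropA α w)) else w

/-- The inverse of the index-`d` baker's map with support `Γ(α)`. -/
noncomputable def invBakerN {n : ℕ} [NeZero n] (d : Fin n) (α : Addr n) :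
    CantorN n → CantorN n :=
  fun w => if w ∈ GammaN α then catA α (invBakerFull d (dropA α w)) else w

/-- The partial prefix-substitution action of the symbol `⟨γ δ⟩` on addresses,
as a relation: `ActRel γ δ ζ ζ'` holds iff `ζ • ⟨γ δ⟩` is defined and
equals `ζ'`. -/
def ActRel {n : ℕ} (γ δ ζ ζ' : Addr n) : Prop :=
  (∃ η, ζ = concatA γ η ∧ ζ' = concatA δ η) ∨
  (∃ η, ζ = concatA δ η ∧ ζ' = concatA γ η) ∨
  (IncompA ζ γ ∧ IncompA ζ δ ∧ ζ' = ζ)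

/-!
Write `B_α` and `B_α⁻¹` for the baker's map and its inverse supported on `Γ(α)` (`bakerN`,
`invBakerN`), and `α.x₁`, `α.x_d` for `α` with the letter `x` appended in coordinate `1` (index `0`)
or `d`.

For incomparable `α, β` the transpositions `⟨α.0₁, β.0_d⟩`, `⟨α.1₁, β.1_d⟩`, `⟨α, β⟩` compose
to `B_α ∘ B_β⁻¹`: a point `α.x₁.u` travels to `β.x_d.u` and back to `α.x_d.u`. Routing through a
third address, `B_α ∘ B_β⁻¹ = (B_α ∘ B_γ⁻¹) ∘ (B_γ ∘ B_β⁻¹)` is a product of transpositions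
whenever some `γ` is incomparable with both `α` and `β`, even if `α` and `β` are comparable.

Splitting `Γ(α)` along the first letter of coordinate `d` gives `B_α = T_α ∘ B_{α.0_d} ∘ B_{α.1_d}`,
where the transposition `T_α = ⟨α.01_d, α.10_d⟩` corrects the order of the two letters now heading
coordinate `d`. Solving for `B_{α.0_d}` and `B_{α.1_d}` turns this into
`B_α = (B_α ∘ B_{α.1_d}⁻¹) ∘ T_α ∘ (B_α ∘ B_{α.0_d}⁻¹)`, so `B_α` is a product of transpositions
as soon as some address is incomparable with `α`. Finally `C_d = W ∘ B_{0₁} ∘ B_{1₁}` with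
`W = ⟨0₁.1_d, 1₁.0_d⟩`, and the halves `1₁` and `0₁` serve as each other's auxiliary address.
-/

section Words

lemma catW_nil (w : Cantor) : catW [] w = w := by
  funext i; simp [catW]

lemma catW_cons (b : Bool) (u : Word) (w : Cantor) :
    catW (b :: u) w = consSeq b (catW u w) := by
  funext i
  rcases i with _ | i <;> simp [catW, consSeq]

lemma catW_singleton (x : Bool) (w : Cantor) : catW [x] w = consSeq x w := by
  rw [catW_cons, catW_nil]

lemma catW_append (u v : Word) (w : Cantor) : catW (u ++ v) w = catW u (catW v w) := by
  induction u with
  | nil => simp [catW_nil]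
  | cons b u ih => simp [catW_cons, ih]

lemma dropSeq_length_catW (u : Word) (w : Cantor) : dropSeq u.length (catW u w) = w := by
  induction u with
  | nil => rfl
  | cons b u ih => rw [catW_cons]; exact ih

lemma prefix_or_prefix_of_catW_eq {u v : Word} {w w' : Cantor} (h : catW u w = catW v w') :
    u <+: v ∨ v <+: u := by
  induction u generalizing v with
  | nil => exact .inl List.nil_prefix
  | cons a u ih =>
    cases v with
    | nil => exact .inr List.nil_prefix
    | cons b v =>
      rw [catW_cons, catW_cons] at h
      have hab : a = b := congrFun h 0
      have htail : catW u w = catW v w' := congrArg (dropSeq 1) h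
      simpa [List.cons_prefix_cons, hab] using ih htail

lemma IncompW.symm {u v : Word} (h : IncompW u v) : IncompW v u := ⟨h.2, h.1⟩

lemma IncompW.append {u v : Word} (h : IncompW u v) (u' v' : Word) :
    IncompW (u ++ u') (v ++ v') :=
  ⟨fun h' => (List.prefix_or_prefix_of_prefix ((List.prefix_append u u').trans h')
      (List.prefix_append v v')).elim h.1 h.2,
    fun h' => (List.prefix_or_prefix_of_prefix ((List.prefix_append v v').trans h')
      (List.prefix_append u u')).elim h.2 h.1⟩

lemma incompW_singleton {x y : Bool} (h : x ≠ y) : IncompW [x] [y] := by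
  simp [IncompW, h, Ne.symm h]

end Words

section Addresses

variable {n : ℕ}

lemma catA_concatA (α β : Addr n) (v : CantorN n) :
    catA (concatA α β) v = catA α (catA β v) := by
  funext e; exact catW_append _ _ _

lemma dropA_catA (α : Addr n) (v : CantorN n) : dropA α (catA α v) = v := by
  funext e; exact dropSeq_length_catW _ _

lemma catA_mem_GammaN (α : Addr n) (v : CantorN n) : catA α v ∈ GammaN α :=
  fun _ => ⟨_, rfl⟩

lemma mem_GammaN_iff {α : Addr n} {w : CantorN n} : w ∈ GammaN α ↔ ∃ v, catA α v = w := by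
  refine ⟨fun h => ⟨dropA α w, ?_⟩, fun ⟨v, hv⟩ => hv ▸ catA_mem_GammaN α v⟩
  funext e
  obtain ⟨u, hu⟩ := h e
  simp only [catA, dropA, ← hu, dropSeq_length_catW]

lemma catA_not_mem_GammaN {α β : Addr n} (h : IncompA α β) (v : CantorN n) :
    catA α v ∉ GammaN β := by
  obtain ⟨e, hαβ, hβα⟩ := h
  intro hv
  obtain ⟨u, hu⟩ := hv e
  exact (prefix_or_prefix_of_catW_eq hu).elim hβα hαβ

lemma mem_GammaN_of_mem_concatA {α β : Addr n} {w : CantorN n}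
    (h : w ∈ GammaN (concatA α β)) : w ∈ GammaN α := by
  obtain ⟨v, rfl⟩ := mem_GammaN_iff.1 h
  rw [catA_concatA]
  exact catA_mem_GammaN _ _

lemma catA_mem_GammaN_concatA_iff {α β : Addr n} {v : CantorN n} :
    catA α v ∈ GammaN (concatA α β) ↔ v ∈ GammaN β := by
  refine ⟨fun h => ?_, fun h => ?_⟩
  · obtain ⟨u, hu⟩ := mem_GammaN_iff.1 h
    rw [catA_concatA] at hu
    have huv := congrArg (dropA α) hu
    rw [dropA_catA, dropA_catA] at huv
    exact huv ▸ catA_mem_GammaN β u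
  · obtain ⟨u, rfl⟩ := mem_GammaN_iff.1 h
    rw [← catA_concatA]
    exact catA_mem_GammaN _ _

lemma IncompA.symm {α β : Addr n} (h : IncompA α β) : IncompA β α :=
  let ⟨e, he⟩ := h; ⟨e, he.symm⟩

lemma IncompA.append {α β : Addr n} (h : IncompA α β) (γ δ : Addr n) :
    IncompA (concatA α γ) (concatA β δ) :=
  let ⟨e, he⟩ := h; ⟨e, he.append _ _⟩

lemma IncompA.append_left {α β : Addr n} (h : IncompA α β) (γ : Addr n) :
    IncompA (concatA α γ) β := by
  obtain ⟨e, he⟩ := h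
  have h' := he.append (γ e) []
  rw [List.append_nil] at h'
  exact ⟨e, h'⟩

lemma IncompA.prepend {γ δ : Addr n} (h : IncompA γ δ) (α : Addr n) :
    IncompA (concatA α γ) (concatA α δ) :=
  let ⟨e, he⟩ := h; ⟨e, by simpa [IncompW, concatA] using he⟩

lemma IncompA.unitA {u v : Word} (h : IncompW u v) (e : Fin n) :
    IncompA (unitA e u) (unitA e v) :=
  ⟨e, by simpa [_root_.unitA] using h⟩

lemma swapN_catA_left (α β : Addr n) (v : CantorN n) : swapN α β (catA α v) = catA β v := by
  simp [swapN, catA_mem_GammaN, dropA_catA]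

lemma swapN_catA_right_of_not_mem {α β : Addr n} {v : CantorN n} (h : catA β v ∉ GammaN α) :
    swapN α β (catA β v) = catA α v := by
  simp [swapN, catA_mem_GammaN, dropA_catA, h]

lemma swapN_catA_right {α β : Addr n} (h : IncompA α β) (v : CantorN n) :
    swapN α β (catA β v) = catA α v :=
  swapN_catA_right_of_not_mem (catA_not_mem_GammaN h.symm v)

lemma swapN_of_not_mem {α β : Addr n} {w : CantorN n} (hα : w ∉ GammaN α)
    (hβ : w ∉ GammaN β) : swapN α β w = w := by
  simp [swapN, hα, hβ]

lemma swapN_catA_of_incomp {α β γ : Addr n} (hα : IncompA γ α) (hβ : IncompA γ β)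
    (v : CantorN n) : swapN α β (catA γ v) = catA γ v :=
  swapN_of_not_mem (catA_not_mem_GammaN hα v) (catA_not_mem_GammaN hβ v)

lemma swapN_involutive {α β : Addr n} (h : IncompA α β) : Function.Involutive (swapN α β) := by
  intro w
  by_cases hα : w ∈ GammaN α
  · obtain ⟨v, rfl⟩ := mem_GammaN_iff.1 hα
    rw [swapN_catA_left, swapN_catA_right h]
  by_cases hβ : w ∈ GammaN β
  · obtain ⟨v, rfl⟩ := mem_GammaN_iff.1 hβ
    rw [swapN_catA_right h, swapN_catA_left]
  rw [swapN_of_not_mem hα hβ, swapN_of_not_mem hα hβ]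

noncomputable def onGamma (α : Addr n) (f : CantorN n → CantorN n) : CantorN n → CantorN n :=
  fun w => if w ∈ GammaN α then catA α (f (dropA α w)) else w

lemma onGamma_catA (α : Addr n) (f : CantorN n → CantorN n) (v : CantorN n) :
    onGamma α f (catA α v) = catA α (f v) := by
  simp [onGamma, catA_mem_GammaN, dropA_catA]

lemma onGamma_of_not_mem {α : Addr n} (f : CantorN n → CantorN n) {w : CantorN n}
    (h : w ∉ GammaN α) : onGamma α f w = w := by
  simp [onGamma, h]

lemma onGamma_comp (α : Addr n) (f g : CantorN n → CantorN n) :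
    onGamma α f ∘ onGamma α g = onGamma α (f ∘ g) := by
  funext w
  by_cases h : w ∈ GammaN α
  · obtain ⟨v, rfl⟩ := mem_GammaN_iff.1 h
    simp only [Function.comp_apply, onGamma_catA]
  · simp only [Function.comp_apply, onGamma_of_not_mem _ h]

lemma onGamma_id (α : Addr n) : onGamma α id = id := by
  funext w
  by_cases h : w ∈ GammaN α
  · obtain ⟨v, rfl⟩ := mem_GammaN_iff.1 h
    exact onGamma_catA α id v
  · exact onGamma_of_not_mem id h

lemma onGamma_onGamma (α β : Addr n) (f : CantorN n → CantorN n) :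
    onGamma α (onGamma β f) = onGamma (concatA α β) f := by
  funext w
  by_cases hαβ : w ∈ GammaN (concatA α β)
  · obtain ⟨v, rfl⟩ := mem_GammaN_iff.1 hαβ
    rw [onGamma_catA, catA_concatA, onGamma_catA, onGamma_catA, catA_concatA]
  rw [onGamma_of_not_mem f hαβ]
  by_cases hα : w ∈ GammaN α
  · obtain ⟨v, rfl⟩ := mem_GammaN_iff.1 hα
    rw [catA_mem_GammaN_concatA_iff] at hαβ
    rw [onGamma_catA, onGamma_of_not_mem f hαβ]
  · exact onGamma_of_not_mem _ hα

lemma onGamma_swapN (α β γ : Addr n) :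
    onGamma α (swapN β γ) = swapN (concatA α β) (concatA α γ) := by
  funext w
  by_cases hβ : w ∈ GammaN (concatA α β)
  · obtain ⟨v, rfl⟩ := mem_GammaN_iff.1 hβ
    rw [swapN_catA_left, catA_concatA, onGamma_catA, swapN_catA_left, catA_concatA]
  by_cases hγ : w ∈ GammaN (concatA α γ)
  · obtain ⟨v, rfl⟩ := mem_GammaN_iff.1 hγ
    rw [catA_concatA, catA_mem_GammaN_concatA_iff] at hβ
    rw [swapN_catA_right_of_not_mem, catA_concatA, onGamma_catA,
      swapN_catA_right_of_not_mem hβ, catA_concatA]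
    rwa [catA_concatA, catA_mem_GammaN_concatA_iff]
  rw [swapN_of_not_mem hβ hγ]
  by_cases hα : w ∈ GammaN α
  · obtain ⟨v, rfl⟩ := mem_GammaN_iff.1 hα
    rw [catA_mem_GammaN_concatA_iff] at hβ hγ
    rw [onGamma_catA, swapN_of_not_mem hβ hγ]
  · exact onGamma_of_not_mem _ hα

lemma catA_unitA_apply (e e' : Fin n) (u : Word) (v : CantorN n) :
    catA (unitA e u) v e' = if e' = e then catW u (v e') else v e' := by
  by_cases h : e' = e <;> simp [catA, unitA, h, catW_nil]

lemma catA_unitA_comm {e e' : Fin n} (h : e ≠ e') (u u' : Word) (v : CantorN n) :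
    catA (unitA e u) (catA (unitA e' u') v) = catA (unitA e' u') (catA (unitA e u) v) := by
  funext i
  simp only [catA_unitA_apply]
  by_cases hi : i = e
  · subst hi; simp [h]
  · simp [hi]

lemma catA_unitA_catA_unitA (e : Fin n) (u u' : Word) (v : CantorN n) :
    catA (unitA e u) (catA (unitA e u') v) = catA (unitA e (u ++ u')) v := by
  funext i
  simp only [catA_unitA_apply, catW_append]
  split_ifs <;> rfl

lemma exists_catA_unitA_eq (e : Fin n) (w : CantorN n) : ∃ x v, catA (unitA e [x]) v = w := by
  refine ⟨w e 0, Function.update w e (dropSeq 1 (w e)), funext fun i => ?_⟩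
  rw [catA_unitA_apply]
  split_ifs with hi
  · subst hi
    rw [Function.update_self, catW_singleton]
    funext k; cases k <;> rfl
  · exact Function.update_of_ne hi _ _

lemma swapN_unitA_pair_reverse (e : Fin n) (x y : Bool) (v : CantorN n) :
    swapN (unitA e [false, true]) (unitA e [true, false]) (catA (unitA e [x, y]) v) =
      catA (unitA e [y, x]) v := by
  have key : ∀ {u u' : Word}, IncompW u u' → IncompA (unitA e u) (unitA e u') :=
    fun h => IncompA.unitA h e
  cases x <;> cases y
  · exact swapN_catA_of_incomp (key ⟨by decide, by decide⟩) (key ⟨by decide, by decide⟩) v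
  · exact swapN_catA_left _ _ v
  · exact swapN_catA_right (key ⟨by decide, by decide⟩) v
  · exact swapN_catA_of_incomp (key ⟨by decide, by decide⟩) (key ⟨by decide, by decide⟩) v

lemma onGamma_comp_onGamma_catA_unitA {a b : Bool} (hab : a ≠ b) (e : Fin n)
    (f : CantorN n → CantorN n) (x : Bool) (u : CantorN n) :
    (onGamma (unitA e [a]) f ∘ onGamma (unitA e [b]) f) (catA (unitA e [x]) u) =
      catA (unitA e [x]) (f u) := by
  have hinc : ∀ {y z : Bool}, y ≠ z → IncompA (unitA e [y]) (unitA e [z]) :=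
    fun h => IncompA.unitA (incompW_singleton h) e
  obtain rfl | rfl : x = a ∨ x = b := by cases a <;> cases b <;> cases x <;> simp_all
  · rw [Function.comp_apply, onGamma_of_not_mem f (catA_not_mem_GammaN (hinc hab) u),
      onGamma_catA]
  · rw [Function.comp_apply, onGamma_catA,
      onGamma_of_not_mem f (catA_not_mem_GammaN (hinc (Ne.symm hab)) _)]

end Addresses

section Baker

variable {n : ℕ} [NeZero n] {d : Fin n}

lemma bakerFull_catA_unitA (hd : d ≠ 0) (x : Bool) (v : CantorN n) :
    bakerFull d (catA (unitA 0 [x]) v) = catA (unitA d [x]) v := by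
  funext e
  simp only [bakerFull, catA_unitA_apply, catW_singleton]
  by_cases he : e = 0
  · subst he; simp [Ne.symm hd]; rfl
  · by_cases hed : e = d
    · subst hed; simp [he]; rfl
    · simp [he, hed]

lemma invBakerFull_catA_unitA (hd : d ≠ 0) (x : Bool) (v : CantorN n) :
    invBakerFull d (catA (unitA d [x]) v) = catA (unitA 0 [x]) v := by
  funext e
  simp only [invBakerFull, catA_unitA_apply, catW_singleton]
  by_cases he : e = 0
  · subst he; simp [Ne.symm hd]; rfl
  · by_cases hed : e = d
    · subst hed; simp [he]; rfl
    · simp [he, hed]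

lemma bakerFull_comp_invBakerFull (hd : d ≠ 0) : bakerFull d ∘ invBakerFull d = id := by
  funext w
  obtain ⟨x, v, rfl⟩ := exists_catA_unitA_eq d w
  simp [invBakerFull_catA_unitA hd, bakerFull_catA_unitA hd]

lemma invBakerFull_comp_bakerFull (hd : d ≠ 0) : invBakerFull d ∘ bakerFull d = id := by
  funext w
  obtain ⟨x, v, rfl⟩ := exists_catA_unitA_eq 0 w
  simp [invBakerFull_catA_unitA hd, bakerFull_catA_unitA hd]

lemma bakerN_eq_onGamma (d : Fin n) (α : Addr n) : bakerN d α = onGamma α (bakerFull d) := rfl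

lemma invBakerN_eq_onGamma (d : Fin n) (α : Addr n) :
    invBakerN d α = onGamma α (invBakerFull d) := rfl

lemma bakerN_invBakerN (hd : d ≠ 0) (α : Addr n) (w : CantorN n) :
    bakerN d α (invBakerN d α w) = w := by
  rw [bakerN_eq_onGamma, invBakerN_eq_onGamma, ← Function.comp_apply (f := onGamma α _),
    onGamma_comp, bakerFull_comp_invBakerFull hd, onGamma_id, id]

lemma invBakerN_bakerN (hd : d ≠ 0) (α : Addr n) (w : CantorN n) :
    invBakerN d α (bakerN d α w) = w := by
  rw [bakerN_eq_onGamma, invBakerN_eq_onGamma, ← Function.comp_apply (f := onGamma α _),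
    onGamma_comp, invBakerFull_comp_bakerFull hd, onGamma_id, id]

lemma swapN_exchange_heads (x y : Bool) (v : CantorN n) :
    swapN (concatA (unitA 0 [false]) (unitA d [true])) (concatA (unitA 0 [true]) (unitA d [false]))
      (catA (unitA 0 [x]) (catA (unitA d [y]) v)) =
      catA (unitA 0 [y]) (catA (unitA d [x]) v) := by
  have h0 : ∀ {a b : Bool} (u u' : Addr n), a ≠ b →
      IncompA (concatA (unitA 0 [a]) u) (concatA (unitA 0 [b]) u') :=
    fun u u' h => (IncompA.unitA (incompW_singleton h) 0).append u u'
  have hd' : ∀ {a b : Bool} (c : Bool), a ≠ b →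
      IncompA (concatA (unitA 0 [c]) (unitA d [a])) (concatA (unitA 0 [c]) (unitA d [b])) :=
    fun c h => (IncompA.unitA (incompW_singleton h) d).prepend _
  simp only [← catA_concatA]
  cases x <;> cases y
  · exact swapN_catA_of_incomp (hd' _ (by decide)) (h0 _ _ (by decide)) v
  · exact swapN_catA_left _ _ v
  · exact swapN_catA_right (h0 _ _ (by decide)) v
  · exact swapN_catA_of_incomp (h0 _ _ (by decide)) (hd' _ (by decide)) v

lemma bakerFull_eq_swapN_comp_bakerN_unitA_zero (hd : d ≠ 0) :
    bakerFull d = swapN (concatA (unitA 0 [false]) (unitA d [true]))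
        (concatA (unitA 0 [true]) (unitA d [false])) ∘
      bakerN d (unitA 0 [false]) ∘ bakerN d (unitA 0 [true]) := by
  funext w
  obtain ⟨x, u, rfl⟩ := exists_catA_unitA_eq 0 w
  obtain ⟨y, v, rfl⟩ := exists_catA_unitA_eq 0 u
  rw [Function.comp_apply, bakerN_eq_onGamma, bakerN_eq_onGamma,
    onGamma_comp_onGamma_catA_unitA (by decide), bakerFull_catA_unitA hd,
    bakerFull_catA_unitA hd, swapN_exchange_heads, catA_unitA_comm (Ne.symm hd)]

lemma bakerFull_eq_swapN_comp_bakerN_unitA (hd : d ≠ 0) (c : Bool) :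
    bakerFull d = swapN (unitA d [false, true]) (unitA d [true, false]) ∘
      bakerN d (unitA d [c]) ∘ bakerN d (unitA d [!c]) := by
  funext w
  obtain ⟨x, u, rfl⟩ := exists_catA_unitA_eq 0 w
  obtain ⟨y, v, rfl⟩ := exists_catA_unitA_eq d u
  rw [bakerFull_catA_unitA hd, Function.comp_apply, bakerN_eq_onGamma, bakerN_eq_onGamma,
    catA_unitA_comm (Ne.symm hd), onGamma_comp_onGamma_catA_unitA (by cases c <;> decide),
    bakerFull_catA_unitA hd, catA_unitA_catA_unitA, catA_unitA_catA_unitA]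
  exact (swapN_unitA_pair_reverse d y x v).symm

lemma bakerN_eq_swapN_comp_bakerN_concatA (hd : d ≠ 0) (α : Addr n) (c : Bool) :
    bakerN d α = swapN (concatA α (unitA d [false, true])) (concatA α (unitA d [true, false])) ∘
      bakerN d (concatA α (unitA d [c])) ∘ bakerN d (concatA α (unitA d [!c])) := by
  rw [bakerN_eq_onGamma d α, bakerFull_eq_swapN_comp_bakerN_unitA hd c, ← onGamma_comp,
    ← onGamma_comp, onGamma_swapN]
  simp only [bakerN_eq_onGamma, onGamma_onGamma]

lemma bakerN_comp_invBakerN_eq_swapN (hd : d ≠ 0) {α β : Addr n} (h : IncompA α β) :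
    bakerN d α ∘ invBakerN d β = swapN α β ∘
      swapN (concatA α (unitA 0 [true])) (concatA β (unitA d [true])) ∘
      swapN (concatA α (unitA 0 [false])) (concatA β (unitA d [false])) := by
  have h0 : IncompA (concatA α (unitA 0 [true])) (concatA α (unitA 0 [false])) :=
    (IncompA.unitA (incompW_singleton (by decide)) 0).prepend α
  have hd' : IncompA (concatA β (unitA d [false])) (concatA β (unitA d [true])) :=
    (IncompA.unitA (incompW_singleton (by decide)) d).prepend β
  funext w
  simp only [Function.comp_apply]
  by_cases hα : w ∈ GammaN α
  · obtain ⟨u, rfl⟩ := mem_GammaN_iff.1 hα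
    obtain ⟨x, v, rfl⟩ := exists_catA_unitA_eq 0 u
    rw [invBakerN_eq_onGamma, onGamma_of_not_mem _ (catA_not_mem_GammaN h _), bakerN_eq_onGamma,
      onGamma_catA, bakerFull_catA_unitA hd]
    conv_rhs => rw [← catA_concatA]
    cases x
    · rw [swapN_catA_left, swapN_catA_of_incomp (h.symm.append _ _) hd', catA_concatA,
        swapN_catA_right h]
    · rw [swapN_catA_of_incomp h0 (h.append _ _), swapN_catA_left, catA_concatA,
        swapN_catA_right h]
  by_cases hβ : w ∈ GammaN β
  · obtain ⟨u, rfl⟩ := mem_GammaN_iff.1 hβ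
    obtain ⟨x, v, rfl⟩ := exists_catA_unitA_eq d u
    rw [invBakerN_eq_onGamma, onGamma_catA, invBakerFull_catA_unitA hd, bakerN_eq_onGamma,
      onGamma_of_not_mem _ (catA_not_mem_GammaN h.symm _)]
    conv_rhs => rw [← catA_concatA]
    cases x
    · rw [swapN_catA_right (h.append _ _), swapN_catA_of_incomp h0.symm (h.append _ _),
        catA_concatA, swapN_catA_left]
    · rw [swapN_catA_of_incomp (h.symm.append _ _) hd'.symm, swapN_catA_right (h.append _ _),
        catA_concatA, swapN_catA_left]
  have hα' : ∀ p : Addr n, w ∉ GammaN (concatA α p) :=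
    fun p hp => hα (mem_GammaN_of_mem_concatA hp)
  have hβ' : ∀ p : Addr n, w ∉ GammaN (concatA β p) :=
    fun p hp => hβ (mem_GammaN_of_mem_concatA hp)
  rw [invBakerN_eq_onGamma, onGamma_of_not_mem _ hβ, bakerN_eq_onGamma, onGamma_of_not_mem _ hα,
    swapN_of_not_mem (hα' _) (hβ' _), swapN_of_not_mem (hα' _) (hβ' _), swapN_of_not_mem hα hβ]

lemma bakerN_concatA_unitA_eq (hd : d ≠ 0) (α : Addr n) (c : Bool) :
    bakerN d (concatA α (unitA d [c])) =
      swapN (concatA α (unitA d [false, true])) (concatA α (unitA d [true, false])) ∘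
        bakerN d α ∘ invBakerN d (concatA α (unitA d [!c])) := by
  have hT : IncompA (concatA α (unitA d [false, true])) (concatA α (unitA d [true, false])) :=
    (IncompA.unitA ⟨by decide, by decide⟩ d).prepend α
  funext w
  rw [bakerN_eq_swapN_comp_bakerN_concatA hd α c]
  simp only [Function.comp_apply, swapN_involutive hT _, bakerN_invBakerN hd]

end Baker

section SwapProducts

variable {n : ℕ}

def IsSwapProduct (f : CantorN n → CantorN n) : Prop :=
  ∃ L : List (Addr n × Addr n), (∀ p ∈ L, IncompA p.1 p.2) ∧
    f = (L.map (fun p => swapN p.1 p.2)).foldr (· ∘ ·) id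

lemma foldr_comp_eq_comp {X : Type*} (l : List (X → X)) (g : X → X) :
    l.foldr (· ∘ ·) g = l.foldr (· ∘ ·) id ∘ g := by
  induction l with
  | nil => rfl
  | cons f l ih => simp only [List.foldr_cons, ih, Function.comp_assoc]

lemma IsSwapProduct.comp {f g : CantorN n → CantorN n} (hf : IsSwapProduct f)
    (hg : IsSwapProduct g) : IsSwapProduct (f ∘ g) := by
  obtain ⟨L, hL, rfl⟩ := hf
  obtain ⟨M, hM, rfl⟩ := hg
  refine ⟨L ++ M, fun p hp => (List.mem_append.1 hp).elim (hL p) (hM p), ?_⟩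
  rw [List.map_append, List.foldr_append, foldr_comp_eq_comp _ (List.foldr _ id _)]

lemma isSwapProduct_swapN {α β : Addr n} (h : IncompA α β) : IsSwapProduct (swapN α β) :=
  ⟨[(α, β)], by simpa using h, rfl⟩

variable [NeZero n] {d : Fin n}

lemma isSwapProduct_bakerN_comp_invBakerN_of_incompA (hd : d ≠ 0) {α β : Addr n}
    (h : IncompA α β) : IsSwapProduct (bakerN d α ∘ invBakerN d β) := by
  rw [bakerN_comp_invBakerN_eq_swapN hd h]
  exact (isSwapProduct_swapN h).comp
    ((isSwapProduct_swapN (h.append _ _)).comp (isSwapProduct_swapN (h.append _ _)))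

lemma isSwapProduct_bakerN_comp_invBakerN (hd : d ≠ 0) {α β γ : Addr n} (hα : IncompA α γ)
    (hβ : IncompA γ β) : IsSwapProduct (bakerN d α ∘ invBakerN d β) := by
  have hsplit : bakerN d α ∘ invBakerN d β =
      (bakerN d α ∘ invBakerN d γ) ∘ (bakerN d γ ∘ invBakerN d β) := by
    funext w
    simp only [Function.comp_apply, invBakerN_bakerN hd]
  rw [hsplit]
  exact (isSwapProduct_bakerN_comp_invBakerN_of_incompA hd hα).comp
    (isSwapProduct_bakerN_comp_invBakerN_of_incompA hd hβ)

lemma isSwapProduct_bakerN (hd : d ≠ 0) {α γ : Addr n} (h : IncompA α γ) :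
    IsSwapProduct (bakerN d α) := by
  have hT : IncompA (concatA α (unitA d [false, true])) (concatA α (unitA d [true, false])) :=
    (IncompA.unitA ⟨by decide, by decide⟩ d).prepend α
  have key : bakerN d α =
      (bakerN d α ∘ invBakerN d (concatA α (unitA d [true]))) ∘
        swapN (concatA α (unitA d [false, true])) (concatA α (unitA d [true, false])) ∘
        (bakerN d α ∘ invBakerN d (concatA α (unitA d [false]))) := by
    funext w
    have split := congrFun (bakerN_eq_swapN_comp_bakerN_concatA hd α false) w
    rw [Bool.not_false] at split
    rw [split, bakerN_concatA_unitA_eq hd α false, bakerN_concatA_unitA_eq hd α true]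
    simp only [Function.comp_apply, swapN_involutive hT _, Bool.not_false, Bool.not_true]
  rw [key]
  exact (isSwapProduct_bakerN_comp_invBakerN hd h (h.append_left _).symm).comp
    ((isSwapProduct_swapN hT).comp
      (isSwapProduct_bakerN_comp_invBakerN hd h (h.append_left _).symm))

end SwapProducts

theorem stmt19_general (n : ℕ) [NeZero n] (d : Fin n) (hd : d ≠ 0) :
    ∃ L : List (Addr n × Addr n),
      (∀ p ∈ L, IncompA p.1 p.2) ∧
      bakerFull d = (L.map (fun p => swapN p.1 p.2)).foldr (· ∘ ·) id := by
  have hW : IncompA (concatA (unitA 0 [false]) (unitA d [true]))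
      (concatA (unitA 0 [true]) (unitA d [false])) :=
    (IncompA.unitA (incompW_singleton (by decide)) 0).append _ _
  have hhalves : IncompA (unitA 0 [false]) (unitA (0 : Fin n) [true]) :=
    IncompA.unitA (incompW_singleton (by decide)) 0
  rw [bakerFull_eq_swapN_comp_bakerN_unitA_zero hd]
  exact (isSwapProduct_swapN hW).comp
    ((isSwapProduct_bakerN hd hhalves).comp (isSwapProduct_bakerN hd hhalves.symm))

/-- The full-support baker's map C_d can be written as a composite of finitely
many transpositions ⟨α β⟩ (with incomparable entries); in particular it lies
in the group generated by the transpositions. -/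
theorem stmt19 (n : ℕ) [NeZero n] (hn : 2 ≤ n) (d : Fin n) (hd : d ≠ 0) :
    ∃ L : List (Addr n × Addr n),
      (∀ p ∈ L, IncompA p.1 p.2) ∧
      bakerFull d = (L.map (fun p => swapN p.1 p.2)).foldr (· ∘ ·) id :=
  stmt19_general n d hd
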